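/- Suppose F ∈ S_γ for some γ ≥ 0 (so F ∈ L_γ, φ_F(γ) < ∞, and F̄^{*2}(x) ∼ 2φ_F(γ)F̄(x)). Then for every n ≥ 1, the n-fold convolution satisfies F̄^{*n}(x) ∼ n φ_F(γ)^{n−1} F̄(x) as x → ∞. -/

import Mathlib

open MeasureTheory Filter Set

/-- The tail distribution function of a probability measure on ℝ. -/
noncomputable def tail (μ : Measure ℝ) (x : ℝ) : ℝ := (μ (Set.Ioi x)).toReal

/-- The exponential moment `φ_F(α) = ∫ e^{αx} dF(x)`, valued in `[0,∞]`. -/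
noncomputable def expMoment (μ : Measure ℝ) (α : ℝ) : ENNReal :=
  ∫⁻ x, ENNReal.ofReal (Real.exp (α * x)) ∂μ

/-- The class `L_γ`: positive tail, and `F̄(x-k)/F̄(x) → e^{γ k}` for every fixed `k`. -/
def MemL (μ : Measure ℝ) (γ : ℝ) : Prop :=
  (∀ x, 0 < tail μ x) ∧
  ∀ k : ℝ, Tendsto (fun x => tail μ (x - k) / tail μ x) atTop (nhds (Real.exp (γ * k)))

/-- `n`-fold convolution of a measure on ℝ with itself. -/
noncomputable def nconv (μ : Measure ℝ) : ℕ → Measure ℝ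
  | 0 => Measure.dirac 0
  | n + 1 => (nconv μ n).conv μ

/-- The class `S_γ`: `F ∈ L_γ`, `φ_F(γ) < ∞`, and `F̄^{*2}(x) ∼ 2 φ_F(γ) F̄(x)`. -/
def MemS (μ : Measure ℝ) (γ : ℝ) : Prop :=
  MemL μ γ ∧ expMoment μ γ < ⊤ ∧
  Tendsto (fun x => tail (nconv μ 2) x / tail μ x) atTop
    (nhds (2 * (expMoment μ γ).toReal))

/-!
Induct on `n` with the following step: if `ν̄(x)/F̄(x) → c` and `φ_ν(γ) < ∞`, then
`(ν * F)‾(x)/F̄(x) → c φ_F(γ) + φ_ν(γ)`. For `X ~ ν`, `Y ~ F` and a level `T ≤ x/2`, the event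
`X + Y > x` splits disjointly into `{Y ≤ T}`, `{X ≤ T}` and `{X, Y > T}`. Since
`F̄(x - y)/F̄(x) → e^{γy}`, dominated convergence sends the first two pieces, divided by `F̄(x)`, to
`c ∫_{y ≤ T} e^{γy} dF` and `∫_{y ≤ T} e^{γy} dν`. As `ν̄ ≤ K F̄`, the third piece is at most `K` times
the corresponding piece for `F * F`, and by the same splitting and `F ∈ S_γ` that one is
`(2φ_F(γ) - 2∫_{y ≤ T} e^{γy} dF + o(1)) F̄(x)`, which is small once `T` is large.
-/

open Topology

theorem tendsto_of_forall_eventually_between {α ι β : Type*} [TopologicalSpace β] [LinearOrder β]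
    [OrderTopology β] {l : Filter α} {p : Filter ι} [p.NeBot] {f : α → β}
    {lower upper : ι → α → β} {a b : ι → β} {L : β}
    (hlower : ∀ i, Tendsto (lower i) l (𝓝 (a i))) (hupper : ∀ i, Tendsto (upper i) l (𝓝 (b i)))
    (hbetween : ∀ i, ∀ᶠ x in l, lower i x ≤ f x ∧ f x ≤ upper i x)
    (ha : Tendsto a p (𝓝 L)) (hb : Tendsto b p (𝓝 L)) : Tendsto f l (𝓝 L) := by
  refine tendsto_order.2 ⟨fun L' hL' => ?_, fun L' hL' => ?_⟩
  · obtain ⟨i, hi⟩ := (ha.eventually (lt_mem_nhds hL')).exists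
    filter_upwards [(hlower i).eventually (lt_mem_nhds hi), hbetween i] with x hx h
    exact hx.trans_le h.1
  · obtain ⟨i, hi⟩ := (hb.eventually (gt_mem_nhds hL')).exists
    filter_upwards [(hupper i).eventually (gt_mem_nhds hi), hbetween i] with x hx h
    exact h.2.trans_lt hx

lemma tail_nonneg (μ : Measure ℝ) (x : ℝ) : 0 ≤ tail μ x := ENNReal.toReal_nonneg

section Tail

variable {μ : Measure ℝ} [IsFiniteMeasure μ]

lemma tail_antitone : Antitone (tail μ) := fun _ _ hab => measureReal_mono (Ioi_subset_Ioi hab)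

lemma measurable_tail : Measurable (tail μ) := tail_antitone.measurable

lemma tail_le_measureReal_univ (x : ℝ) : tail μ x ≤ μ.real univ := measureReal_mono (subset_univ _)

lemma integrable_tail_comp (σ : Measure ℝ) [IsFiniteMeasure σ] {u : ℝ → ℝ} (hu : Measurable u) :
    Integrable (fun y => tail μ (u y)) σ :=
  .of_bound (measurable_tail.comp hu).aestronglyMeasurable (μ.real univ) <| ae_of_all _ fun y => by
    rw [Real.norm_of_nonneg (tail_nonneg _ _)]
    exact tail_le_measureReal_univ _

end Tail

section ExpMoment

lemma expMoment_conv (ν μ : Measure ℝ) [SFinite ν] [SFinite μ] (α : ℝ) :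
    expMoment (ν.conv μ) α = expMoment ν α * expMoment μ α := by
  rw [expMoment, Measure.conv, lintegral_map (by fun_prop) (by fun_prop)]
  simp_rw [mul_add, Real.exp_add, ENNReal.ofReal_mul (Real.exp_nonneg _)]
  exact lintegral_prod_mul (f := fun x => ENNReal.ofReal (Real.exp (α * x)))
    (g := fun x => ENNReal.ofReal (Real.exp (α * x))) (by fun_prop) (by fun_prop)

variable (μ : Measure ℝ)

lemma nconv_succ (n : ℕ) : nconv μ (n + 1) = (nconv μ n).conv μ := rfl

lemma nconv_one [SFinite μ] : nconv μ 1 = μ := Measure.dirac_zero_conv μ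

lemma nconv_two [SFinite μ] : nconv μ 2 = μ.conv μ := by
  rw [nconv_succ, nconv_one]

instance [SFinite μ] (n : ℕ) : SFinite (nconv μ n) := by
  induction n with
  | zero => exact inferInstanceAs (SFinite (Measure.dirac 0))
  | succ n ih => rw [nconv_succ]; infer_instance

instance [IsProbabilityMeasure μ] (n : ℕ) : IsProbabilityMeasure (nconv μ n) := by
  induction n with
  | zero => exact inferInstanceAs (IsProbabilityMeasure (Measure.dirac 0))
  | succ n ih => rw [nconv_succ]; infer_instance

lemma expMoment_nconv [SFinite μ] (α : ℝ) (n : ℕ) :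
    expMoment (nconv μ n) α = expMoment μ α ^ n := by
  induction n with
  | zero => simp [expMoment, nconv]
  | succ n ih => rw [nconv_succ, expMoment_conv, ih, pow_succ]

variable {μ} {γ : ℝ}

lemma integral_exp_mul : ∫ y, Real.exp (γ * y) ∂μ = (expMoment μ γ).toReal :=
  integral_eq_lintegral_of_nonneg_ae (ae_of_all _ fun _ => (Real.exp_pos _).le)
    (by fun_prop : Measurable _).aestronglyMeasurable

lemma integrable_exp_mul (h : expMoment μ γ < ⊤) : Integrable (fun y => Real.exp (γ * y)) μ :=
  ⟨(by fun_prop : Measurable _).aestronglyMeasurable,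
    (hasFiniteIntegral_iff_ofReal (ae_of_all _ fun _ => (Real.exp_pos _).le)).2 h⟩

lemma tendsto_setIntegral_Iic_exp_mul (h : expMoment μ γ < ⊤) :
    Tendsto (fun T => ∫ y in Iic T, Real.exp (γ * y) ∂μ) atTop (𝓝 (expMoment μ γ).toReal) := by
  have := tendsto_setIntegral_of_monotone (fun T => measurableSet_Iic)
    (fun _ _ hab => Iic_subset_Iic.2 hab) (integrable_exp_mul h).integrableOn
  rwa [iUnion_Iic, Measure.restrict_univ, integral_exp_mul] at this

end ExpMoment

lemma tail_conv (ρ σ : Measure ℝ) [SFinite ρ] [SFinite σ] (x : ℝ) : tail (ρ.conv σ) x = (ρ.prod σ).real {p | x < p.1 + p.2} := by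
  rw [tail, Measure.conv, Measure.map_apply (by fun_prop) measurableSet_Ioi]
  rfl

section ConvTail

variable (ρ σ : Measure ℝ) [IsFiniteMeasure ρ] [IsFiniteMeasure σ]

lemma measureReal_prod_snd_mem_and_lt {s : Set ℝ} (hs : MeasurableSet s) {u : ℝ → ℝ}
    (hu : Measurable u) :
    (ρ.prod σ).real {p | p.2 ∈ s ∧ u p.2 < p.1} = ∫ y in s, tail ρ (u y) ∂σ := by
  have hS : MeasurableSet {p : ℝ × ℝ | p.2 ∈ s ∧ u p.2 < p.1} :=
    (measurable_snd hs).inter (measurableSet_lt (hu.comp measurable_snd) measurable_fst)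
  rw [Measure.real, Measure.prod_apply_symm hS, ← integral_indicator hs,
    ← integral_toReal (measurable_measure_prodMk_right hS).aemeasurable
      (ae_of_all _ fun _ => measure_lt_top _ _)]
  congr 1 with y
  by_cases hy : y ∈ s <;> simp [hy, tail, Ioi]

lemma measureReal_prod_fst_mem_and_lt {s : Set ℝ} (hs : MeasurableSet s) {u : ℝ → ℝ}
    (hu : Measurable u) :
    (ρ.prod σ).real {p | p.1 ∈ s ∧ u p.1 < p.2} = ∫ y in s, tail σ (u y) ∂ρ := by
  rw [← measureReal_prod_snd_mem_and_lt σ ρ hs hu, ← Measure.prod_swap,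
    map_measureReal_apply measurable_swap]
  · rfl
  · exact (measurable_fst hs).inter (measurableSet_lt (hu.comp measurable_fst) measurable_snd)

lemma tail_conv_eq_add {T x : ℝ} (hx : 2 * T ≤ x) :
    tail (ρ.conv σ) x = ∫ y in Iic T, tail ρ (x - y) ∂σ + ∫ y in Iic T, tail σ (x - y) ∂ρ
      + ∫ y in Ioi T, tail ρ (max T (x - y)) ∂σ := by
  have hsplit : {p : ℝ × ℝ | x < p.1 + p.2} = {p | p.2 ∈ Iic T ∧ x - p.2 < p.1}
      ∪ {p | p.1 ∈ Iic T ∧ x - p.1 < p.2} ∪ {p | p.2 ∈ Ioi T ∧ max T (x - p.2) < p.1} := by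
    ext p
    simp only [mem_ofPred_eq, mem_union, mem_Iic, mem_Ioi, max_lt_iff]
    constructor
    · intro h
      by_cases h2 : p.2 ≤ T
      · exact .inl (.inl ⟨h2, by linarith⟩)
      by_cases h1 : p.1 ≤ T
      · exact .inl (.inr ⟨h1, by linarith⟩)
      exact .inr ⟨by linarith, by linarith, by linarith⟩
    · rintro ((⟨-, h⟩ | ⟨-, h⟩) | ⟨-, -, h⟩) <;> linarith
  have hS₂ : MeasurableSet {p : ℝ × ℝ | p.1 ∈ Iic T ∧ x - p.1 < p.2} :=
    (measurable_fst measurableSet_Iic).inter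
      (measurableSet_lt ((measurable_const.sub measurable_id).comp measurable_fst) measurable_snd)
  have hS₃ : MeasurableSet {p : ℝ × ℝ | p.2 ∈ Ioi T ∧ max T (x - p.2) < p.1} :=
    (measurable_snd measurableSet_Ioi).inter (measurableSet_lt
      ((measurable_const.max (measurable_const.sub measurable_id)).comp measurable_snd)
      measurable_fst)
  have hd₁₂ : Disjoint {p : ℝ × ℝ | p.2 ∈ Iic T ∧ x - p.2 < p.1}
      {p | p.1 ∈ Iic T ∧ x - p.1 < p.2} := by
    refine Set.disjoint_left.2 fun p h1 h2 => ?_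
    simp only [mem_ofPred_eq, mem_Iic] at h1 h2
    linarith [h1.2, h2.2]
  have hd₃ : Disjoint ({p : ℝ × ℝ | p.2 ∈ Iic T ∧ x - p.2 < p.1}
      ∪ {p | p.1 ∈ Iic T ∧ x - p.1 < p.2}) {p | p.2 ∈ Ioi T ∧ max T (x - p.2) < p.1} := by
    refine Set.disjoint_left.2 fun p h1 h2 => ?_
    simp only [mem_union, mem_ofPred_eq, mem_Iic, mem_Ioi, max_lt_iff] at h1 h2
    rcases h1 with h1 | h1 <;> linarith [h1.1, h2.1, h2.2.1]
  rw [tail_conv, hsplit, measureReal_union hd₃ hS₃, measureReal_union hd₁₂ hS₂,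
    measureReal_prod_snd_mem_and_lt _ _ measurableSet_Iic (by fun_prop),
    measureReal_prod_fst_mem_and_lt _ _ measurableSet_Iic (by fun_prop),
    measureReal_prod_snd_mem_and_lt _ _ measurableSet_Ioi (u := fun y => max T (x - y)) (by fun_prop)]

end ConvTail

lemma tendsto_tail_div_self {μ : Measure ℝ} (hpos : ∀ x, 0 < tail μ x) :
    Tendsto (fun x => tail μ x / tail μ x) atTop (𝓝 1) :=
  tendsto_const_nhds.congr fun x => (div_self (hpos x).ne').symm

lemma exists_tail_le_mul_tail {ν μ : Measure ℝ} [IsFiniteMeasure ν] [IsFiniteMeasure μ]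
    (hpos : ∀ x, 0 < tail μ x) {c : ℝ} (h : Tendsto (fun x => tail ν x / tail μ x) atTop (𝓝 c)) :
    ∃ K, ∀ u, tail ν u ≤ K * tail μ u := by
  obtain ⟨x₀, hx₀⟩ := eventually_atTop.1 (h.eventually_lt_const (lt_add_one c))
  refine ⟨max (c + 1) (ν.real univ / tail μ x₀), fun u => ?_⟩
  rcases le_or_gt x₀ u with hu | hu
  · calc tail ν u ≤ (c + 1) * tail μ u := ((div_lt_iff₀ (hpos u)).1 (hx₀ u hu)).le
      _ ≤ _ := mul_le_mul_of_nonneg_right (le_max_left _ _) (tail_nonneg _ _)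
  · calc tail ν u ≤ ν.real univ := tail_le_measureReal_univ u
      _ ≤ ν.real univ / tail μ x₀ * tail μ u := by
        rw [div_mul_eq_mul_div, le_div_iff₀ (hpos x₀)]
        exact mul_le_mul_of_nonneg_left (tail_antitone hu.le) measureReal_nonneg
      _ ≤ _ := mul_le_mul_of_nonneg_right (le_max_right _ _) (tail_nonneg _ _)

lemma tail_conv_sandwich {ν μ : Measure ℝ} [IsFiniteMeasure ν] [IsFiniteMeasure μ] {K : ℝ}
    (hK : ∀ u, tail ν u ≤ K * tail μ u) {T x : ℝ} (hx : 2 * T ≤ x) :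
    ∫ y in Iic T, tail ν (x - y) ∂μ + ∫ y in Iic T, tail μ (x - y) ∂ν ≤ tail (ν.conv μ) x ∧
      tail (ν.conv μ) x ≤ ∫ y in Iic T, tail ν (x - y) ∂μ + ∫ y in Iic T, tail μ (x - y) ∂ν
        + K * (tail (μ.conv μ) x - 2 * ∫ y in Iic T, tail μ (x - y) ∂μ) := by
  have hνμ := tail_conv_eq_add ν μ hx
  have hμμ := tail_conv_eq_add μ μ hx
  have hrem_nonneg : 0 ≤ ∫ y in Ioi T, tail ν (max T (x - y)) ∂μ :=
    integral_nonneg fun _ => tail_nonneg _ _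
  have hrem_le : ∫ y in Ioi T, tail ν (max T (x - y)) ∂μ
      ≤ K * ∫ y in Ioi T, tail μ (max T (x - y)) ∂μ := by
    rw [← integral_const_mul]
    exact integral_mono (integrable_tail_comp _ (by fun_prop))
      ((integrable_tail_comp _ (by fun_prop)).const_mul K) fun y => hK _
  have hrem_μμ : tail (μ.conv μ) x - 2 * ∫ y in Iic T, tail μ (x - y) ∂μ
      = ∫ y in Ioi T, tail μ (max T (x - y)) ∂μ := by linarith
  rw [hrem_μμ]
  constructor <;> linarith

lemma MemL.tendsto_setIntegral_Iic_div_tail {μ : Measure ℝ} [IsFiniteMeasure μ] {γ : ℝ}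
    (hL : MemL μ γ) (σ : Measure ℝ) [IsFiniteMeasure σ] {g : ℝ → ℝ} (hg0 : ∀ u, 0 ≤ g u)
    (hgm : Measurable g) {K : ℝ} (hK : ∀ u, g u ≤ K * tail μ u) {c : ℝ}
    (hc : Tendsto (fun x => g x / tail μ x) atTop (𝓝 c)) (T : ℝ) :
    Tendsto (fun x => (∫ y in Iic T, g (x - y) ∂σ) / tail μ x) atTop
      (𝓝 (c * ∫ y in Iic T, Real.exp (γ * y) ∂σ)) := by
  obtain ⟨hpos, hshift⟩ := hL
  have hK0 : 0 ≤ K := nonneg_of_mul_nonneg_left ((hg0 0).trans (hK 0)) (hpos 0)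
  simp_rw [← integral_const_mul, ← integral_div]
  refine tendsto_integral_filter_of_dominated_convergence (fun _ => K * (Real.exp (γ * T) + 1))
    (.of_forall fun x => ((hgm.comp (measurable_const.sub measurable_id)).div_const _)
      |>.aestronglyMeasurable) ?_ (integrable_const _) (.of_forall fun y => ?_)
  · filter_upwards [(hshift T).eventually_lt_const (lt_add_one _)] with x hx
    refine (ae_restrict_iff' measurableSet_Iic).2 (.of_forall fun y hy => ?_)
    rw [Real.norm_of_nonneg (div_nonneg (hg0 _) (hpos x).le), div_le_iff₀ (hpos x)]
    calc g (x - y) ≤ K * tail μ (x - T) :=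
          (hK _).trans (mul_le_mul_of_nonneg_left (tail_antitone (by linarith [mem_Iic.1 hy])) hK0)
      _ ≤ K * ((Real.exp (γ * T) + 1) * tail μ x) :=
          mul_le_mul_of_nonneg_left ((div_lt_iff₀ (hpos x)).1 hx).le hK0
      _ = _ := by ring
  · have hg_shift : Tendsto (fun x => g (x - y) / tail μ (x - y)) atTop (𝓝 c) :=
      hc.comp (tendsto_atTop_atTop.2 fun b => ⟨b + y, fun x hx => by linarith⟩)
    refine (hg_shift.mul (hshift y)).congr fun x => ?_
    exact div_mul_div_cancel₀ (hpos _).ne'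

theorem MemS.tendsto_tail_conv_div_tail {μ : Measure ℝ} [IsFiniteMeasure μ] {γ : ℝ}
    (hS : MemS μ γ) {ν : Measure ℝ} [IsFiniteMeasure ν] {c : ℝ}
    (hν : Tendsto (fun x => tail ν x / tail μ x) atTop (𝓝 c)) (hφν : expMoment ν γ < ⊤) :
    Tendsto (fun x => tail (ν.conv μ) x / tail μ x) atTop
      (𝓝 (c * (expMoment μ γ).toReal + (expMoment ν γ).toReal)) := by
  obtain ⟨hL, hφμ, h2⟩ := hS
  rw [nconv_two] at h2
  obtain ⟨K, hK⟩ := exists_tail_le_mul_tail hL.1 hν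
  have hself := tendsto_tail_div_self hL.1
  have hνμ T := hL.tendsto_setIntegral_Iic_div_tail μ (tail_nonneg ν) measurable_tail hK hν T
  have hμν T := hL.tendsto_setIntegral_Iic_div_tail ν (tail_nonneg μ) measurable_tail (K := 1)
    (fun u => (one_mul _).ge) hself T
  have hμμ T := hL.tendsto_setIntegral_Iic_div_tail μ (tail_nonneg μ) measurable_tail (K := 1)
    (fun u => (one_mul _).ge) hself T
  have hEμ := tendsto_setIntegral_Iic_exp_mul hφμ
  have hEν := tendsto_setIntegral_Iic_exp_mul hφν
  refine tendsto_of_forall_eventually_between (p := atTop) (fun T => (hνμ T).add (hμν T))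
    (fun T => ((hνμ T).add (hμν T)).add ((h2.sub ((hμμ T).const_mul 2)).const_mul K))
    (fun T => (eventually_ge_atTop (2 * T)).mono fun x hx => ?_) ?_ ?_
  · obtain ⟨hlow, hup⟩ := tail_conv_sandwich hK hx
    have ht := (hL.1 x).le
    constructor
    · rw [← add_div]
      exact div_le_div_of_nonneg_right hlow ht
    · exact (div_le_div_of_nonneg_right hup ht).trans_eq (by ring)
  · simpa using (hEμ.const_mul c).add (hEν.const_mul 1)
  · simpa using ((hEμ.const_mul c).add (hEν.const_mul 1)).add
      (((tendsto_const_nhds (x := 2 * (expMoment μ γ).toReal)).sub (hEμ.const_mul 2)).const_mul K)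

theorem memS_nconv_tail_general (μ : Measure ℝ) [IsProbabilityMeasure μ] (γ : ℝ)
    (hS : MemS μ γ) :
    ∀ n : ℕ, 1 ≤ n →
      Tendsto (fun x => tail (nconv μ n) x / tail μ x) atTop
        (nhds (n * (expMoment μ γ).toReal ^ (n - 1))) := by
  intro n hn
  induction n, hn using Nat.le_induction with
  | base => simpa [nconv_one] using tendsto_tail_div_self hS.1.1
  | succ n hn ih =>
    have hφn : expMoment (nconv μ n) γ < ⊤ := by
      rw [expMoment_nconv]
      exact ENNReal.pow_lt_top hS.2.1
    rw [nconv_succ]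
    convert hS.tendsto_tail_conv_div_tail ih hφn using 2
    obtain ⟨k, rfl⟩ : ∃ k, n = k + 1 := ⟨n - 1, by omega⟩
    rw [expMoment_nconv, ENNReal.toReal_pow]
    push_cast
    ring

theorem memS_nconv_tail (μ : Measure ℝ) [IsProbabilityMeasure μ] (γ : ℝ)
    (hγ : 0 ≤ γ) (hS : MemS μ γ) :
    ∀ n : ℕ, 1 ≤ n →
      Tendsto (fun x => tail (nconv μ n) x / tail μ x) atTop
        (nhds (n * (expMoment μ γ).toReal ^ (n - 1))) :=
  memS_nconv_tail_general μ γ hS
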